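/- There is an open neighborhood W of 0 in Sym_d(ℝ) such that for every h ∈ W with tr(h) ≤ 0 and every g ∈ GL_d(ℝ) with gᵗg = I_d + h, either g is orthogonal or det(g) < 1. -/

import Mathlib

open Matrix
open scoped ComplexOrder

/-! The neighbourhood can be all of `Sym_d(ℝ)`. The eigenvalues `λᵢ ≥ 0` of `gᵀg = 1 + h` satisfy
`∑ λᵢ = d + tr h ≤ d`, and `∏ λᵢ = (det g)² ≥ 1` unless `det g < 1`. Since `λ ≤ exp (λ - 1)` with
equality only at `λ = 1`, we get `∏ λᵢ ≤ exp (∑ λᵢ - d) ≤ 1` with equality only if every `λᵢ = 1`,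
that is, only if `gᵀg = 1`. -/

theorem Real.eq_one_of_one_le_prod_of_sum_le_card {ι : Type*} [Fintype ι] {μ : ι → ℝ}
    (hμ : ∀ i, 0 ≤ μ i) (hprod : 1 ≤ ∏ i, μ i) (hsum : ∑ i, μ i ≤ Fintype.card ι) (i : ι) :
    μ i = 1 := by
  by_contra hi
  have hpos : ∀ j, 0 < μ j := fun j ↦ (hμ j).lt_of_ne fun hj ↦ by
    rw [Finset.prod_eq_zero (Finset.mem_univ j) hj.symm] at hprod
    norm_num at hprod
  have hlt : ∏ j, μ j < ∏ j, Real.exp (μ j - 1) :=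
    Finset.prod_lt_prod (fun j _ ↦ hpos j)
      (fun j _ ↦ by linarith [Real.add_one_le_exp (μ j - 1)])
      ⟨i, Finset.mem_univ i, by linarith [Real.add_one_lt_exp (sub_ne_zero.mpr hi)]⟩
  have hle : ∏ j, Real.exp (μ j - 1) ≤ 1 := by
    rw [← Real.exp_sum, Real.exp_le_one_iff, Finset.sum_sub_distrib]
    simpa using hsum
  linarith

theorem Matrix.IsHermitian.eq_one_of_eigenvalues_eq_one {𝕜 n : Type*} [RCLike 𝕜] [Fintype n]
    [DecidableEq n] {A : Matrix n n 𝕜} (hA : A.IsHermitian) (h : ∀ i, hA.eigenvalues i = 1) :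
    A = 1 := by
  rw [hA.spectral_theorem, show (RCLike.ofReal ∘ hA.eigenvalues : n → 𝕜) = fun _ ↦ 1 by
    ext i; simp [h i], diagonal_one, map_one]

theorem Matrix.PosSemidef.eq_one_of_re_trace_le_card_of_one_le_re_det {𝕜 n : Type*} [RCLike 𝕜]
    [Fintype n] [DecidableEq n] {A : Matrix n n 𝕜} (hA : A.PosSemidef)
    (htr : RCLike.re A.trace ≤ Fintype.card n) (hdet : 1 ≤ RCLike.re A.det) : A = 1 := by
  have hH := hA.isHermitian
  refine hH.eq_one_of_eigenvalues_eq_one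
    (Real.eq_one_of_one_le_prod_of_sum_le_card hA.eigenvalues_nonneg ?_ ?_)
  · rwa [hH.det_eq_prod_eigenvalues, ← RCLike.ofReal_prod, RCLike.ofReal_re] at hdet
  · rwa [hH.trace_eq_sum_eigenvalues, ← RCLike.ofReal_sum, RCLike.ofReal_re] at htr

theorem orthogonal_or_det_lt_one {d : ℕ} :
    ∃ W : Set (Matrix (Fin d) (Fin d) ℝ), IsOpen W ∧ (0 : Matrix (Fin d) (Fin d) ℝ) ∈ W ∧
      ∀ h ∈ W, h.IsSymm → h.trace ≤ 0 →
        ∀ g : Matrix (Fin d) (Fin d) ℝ, g.det ≠ 0 → gᵀ * g = 1 + h →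
          gᵀ * g = 1 ∨ g.det < 1 := by
  refine ⟨Set.univ, isOpen_univ, Set.mem_univ _, fun h _ _ htr g _ hgg ↦ ?_⟩
  refine or_iff_not_imp_right.mpr fun hg ↦ ?_
  have hpsd : (gᵀ * g).PosSemidef := by
    simpa using posSemidef_conjTranspose_mul_self g
  refine hpsd.eq_one_of_re_trace_le_card_of_one_le_re_det ?_ ?_
  · simpa [hgg, trace_add] using htr
  · simp only [RCLike.re_to_real, det_mul, det_transpose]
    nlinarith
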